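/- arXiv:2102.06202 — 3 statements merged into one kernel-verified Lean document; each statement's English description precedes it below -/
import Mathlib

section
/- Fix scores s_1,…,s_n ∈ (0,1], a quantile level q ∈ (0,1), a privacy parameter ε > 0, and m bins, and let ŝ be the output of the private quantile mechanism. Then for every δ ∈ (0,1), P( (1/n)·#{i : [s_i] ≤ ŝ} ≥ q − 2·max{(1−q)/q, 1}·log(m/δ)/(nε) ) ≥ 1 − δ, where the probability is over the randomness of the mechanism. -/
/-! The bin edge at a sample `q`-quantile of the discretized scores has weight at most `n`.
At a bin edge below which lies less than a `q - 2M log(m/δ)/(nε)` fraction of the scores, the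
scores above it alone make the weight at least `n + 2 log(m/δ)/ε`. The exponential mechanism
therefore outputs such an edge with probability at most `exp(-log(m/δ)) = δ/m`, and a union bound
over the at most `m` bad edges finishes the proof. -/

open MeasureTheory ProbabilityTheory

/-- The weight assigned to bin edge `e j` by the private quantile mechanism run at
quantile level `q` on the (discretized) scores `d ∘ v`. -/
noncomputable def quantWeight {n : ℕ} (e : ℕ → ℝ) (d : ℝ → ℝ) (q : ℝ)
    (v : Fin n → ℝ) (j : ℕ) : ℝ :=
  max ((Set.ncard {i : Fin n | d (v i) < e j} : ℝ) / q)
      ((Set.ncard {i : Fin n | e j < d (v i)} : ℝ) / (1 - q))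

/-- The probability that the private quantile mechanism (exponential mechanism with
privacy level `ε`) outputs the bin edge `e j`. -/
noncomputable def mechProb (m : ℕ) {n : ℕ} (e : ℕ → ℝ) (d : ℝ → ℝ) (q ε : ℝ)
    (v : Fin n → ℝ) (j : ℕ) : ℝ :=
  Real.exp (-(ε / 2) * quantWeight e d q v j) /
    ∑ j' ∈ Finset.Icc 1 m, Real.exp (-(ε / 2) * quantWeight e d q v j')

theorem exists_mem_Icc_mem_Ioc {e : ℕ → ℝ} {m : ℕ} {x : ℝ}
    (hx : x ∈ Set.Ioc (e 0) (e m)) :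
    ∃ j ∈ Finset.Icc 1 m, x ∈ Set.Ioc (e (j - 1)) (e j) := by
  classical
  have hex : ∃ j, j ≤ m ∧ x ≤ e j := ⟨m, le_rfl, hx.2⟩
  obtain ⟨hjm, hxj⟩ := Nat.find_spec hex
  have hj1 : 1 ≤ Nat.find hex := Nat.one_le_iff_ne_zero.mpr fun h0 ↦ by
    rw [h0] at hxj
    exact hx.1.not_ge hxj
  have hprev : ¬(Nat.find hex - 1 ≤ m ∧ x ≤ e (Nat.find hex - 1)) :=
    Nat.find_min hex (by omega)
  exact ⟨_, Finset.mem_Icc.mpr ⟨hj1, hjm⟩, not_le.mp fun h ↦ hprev ⟨by omega, h⟩, hxj⟩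

theorem exists_ncard_lt_le_and_le_ncard {ι : Type*} [Finite ι] [Nonempty ι] (t : ι → ℝ)
    {r : ℝ} (hr0 : 0 ≤ r) (hr : r ≤ Nat.card ι) :
    ∃ k, ({i | t i < t k}.ncard : ℝ) ≤ r ∧ r ≤ {i | t i ≤ t k}.ncard := by
  obtain ⟨kmax, -, hkmax⟩ := Set.exists_max_image Set.univ t Set.finite_univ Set.univ_nonempty
  obtain ⟨k, hk, hkmin⟩ := Set.exists_min_image {k | r ≤ ({i | t i ≤ t k}.ncard : ℝ)} t
    (Set.toFinite _) ⟨kmax, by simpa [fun i ↦ hkmax i trivial] using hr⟩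
  refine ⟨k, not_lt.mp fun hlt ↦ ?_, hk⟩
  have hbelow : {i | t i < t k}.Nonempty := Set.nonempty_of_ncard_ne_zero fun h ↦ by
    rw [h, Nat.cast_zero] at hlt
    exact hlt.not_ge hr0
  obtain ⟨i, hi, himax⟩ := Set.exists_max_image _ t (Set.toFinite _) hbelow
  have hcount : r ≤ ({j | t j ≤ t i}.ncard : ℝ) :=
    hlt.le.trans (Nat.cast_le.mpr (Set.ncard_le_ncard fun j hj ↦ himax j hj))
  exact (hkmin i hcount).not_gt hi

theorem cast_ncard_lt_eq_sub {ι : Type*} [Finite ι] (t : ι → ℝ) (x : ℝ) :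
    ({i | x < t i}.ncard : ℝ) = Nat.card ι - {i | t i ≤ x}.ncard := by
  rw [← Set.ncard_add_ncard_compl {i | x < t i}]
  simp only [Set.compl_ofPred, not_lt, Nat.cast_add, add_sub_cancel_right]

section QuantWeight

variable {m n : ℕ} {e : ℕ → ℝ} {d : ℝ → ℝ} {q : ℝ} {v : Fin n → ℝ} {j : ℕ}

theorem quantWeight_le (hq : q ∈ Set.Ioo 0 1)
    (hlt : ({i | d (v i) < e j}.ncard : ℝ) ≤ q * n)
    (hle : q * n ≤ {i | d (v i) ≤ e j}.ncard) :
    quantWeight e d q v j ≤ n := by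
  rw [quantWeight, max_le_iff, div_le_iff₀ hq.1, div_le_iff₀ (sub_pos.mpr hq.2),
    cast_ncard_lt_eq_sub, Nat.card_fin]
  constructor <;> nlinarith

theorem sub_ncard_div_le_quantWeight :
    (n - {i | d (v i) ≤ e j}.ncard) / (1 - q) ≤ quantWeight e d q v j := by
  rw [quantWeight, cast_ncard_lt_eq_sub, Nat.card_fin]
  exact le_max_right _ _

theorem exists_quantWeight_le (hn : 1 ≤ n) (hq : q ∈ Set.Ioo 0 1)
    (hgrid : ∀ i, ∃ j ∈ Finset.Icc 1 m, d (v i) = e j) :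
    ∃ j ∈ Finset.Icc 1 m, quantWeight e d q v j ≤ n := by
  have : Nonempty (Fin n) := ⟨⟨0, hn⟩⟩
  obtain ⟨k, hk_lt, hk_le⟩ := exists_ncard_lt_le_and_le_ncard (fun i ↦ d (v i)) (r := q * n)
    (by positivity [hq.1.le]) (by rw [Nat.card_fin]; nlinarith [hq.2])
  obtain ⟨j, hj, hjk⟩ := hgrid k
  exact ⟨j, hj, quantWeight_le hq (hjk ▸ hk_lt) (hjk ▸ hk_le)⟩

end QuantWeight

theorem exp_div_sum_exp_le {ι : Type*} {S : Finset ι} {f : ι → ℝ} {c t : ℝ} (hc : 0 ≤ c)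
    {i j : ι} (hi : i ∈ S) (hij : f i + t ≤ f j) :
    Real.exp (-c * f j) / ∑ k ∈ S, Real.exp (-c * f k) ≤ Real.exp (-c * t) := by
  have hsum : Real.exp (-c * f i) ≤ ∑ k ∈ S, Real.exp (-c * f k) :=
    Finset.single_le_sum (f := fun k ↦ Real.exp (-c * f k)) (fun k _ ↦ (Real.exp_pos _).le) hi
  calc Real.exp (-c * f j) / ∑ k ∈ S, Real.exp (-c * f k)
      ≤ Real.exp (-c * f j) / Real.exp (-c * f i) :=
        div_le_div_of_nonneg_left (Real.exp_pos _).le (Real.exp_pos _) hsum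
    _ = Real.exp (-c * (f j - f i)) := by rw [← Real.exp_sub]; ring_nf
    _ ≤ Real.exp (-c * t) := Real.exp_le_exp.mpr (by nlinarith)

section MechProb

variable {m n : ℕ} {e : ℕ → ℝ} {d : ℝ → ℝ} {q ε : ℝ} {v : Fin n → ℝ}

theorem mechProb_nonneg (j : ℕ) : 0 ≤ mechProb m e d q ε v j :=
  div_nonneg (Real.exp_pos _).le <| Finset.sum_nonneg fun _ _ ↦ (Real.exp_pos _).le

theorem sum_mechProb (hm : 1 ≤ m) : ∑ j ∈ Finset.Icc 1 m, mechProb m e d q ε v j = 1 := by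
  simp only [mechProb, ← Finset.sum_div]
  exact div_self <| (Finset.sum_pos (fun _ _ ↦ Real.exp_pos _) ⟨1, by simpa using hm⟩).ne'

theorem mechProb_le_exp_neg_of_ncard_lt {M L : ℝ} (hq : q ∈ Set.Ioo 0 1) (hε : 0 < ε)
    (hn : 1 ≤ n) (hM : 1 ≤ M) (hL : 0 ≤ L)
    {j₀ j : ℕ} (hj₀ : j₀ ∈ Finset.Icc 1 m) (hw₀ : quantWeight e d q v j₀ ≤ n)
    (hj : ({i | d (v i) ≤ e j}.ncard : ℝ) / n < q - 2 * M * L / (n * ε)) :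
    mechProb m e d q ε v j ≤ Real.exp (-L) := by
  have hn' : (0 : ℝ) < n := by exact_mod_cast hn
  have hcount : ({i | d (v i) ≤ e j}.ncard : ℝ) < q * n - 2 * M * L / ε := by
    have hεn : 2 * M * L / (n * ε) * n = 2 * M * L / ε := by field_simp
    rw [div_lt_iff₀ hn', sub_mul, hεn] at hj
    exact hj
  have hgap : quantWeight e d q v j₀ + 2 * L / ε ≤ quantWeight e d q v j := by
    refine le_trans ?_ sub_ncard_div_le_quantWeight
    rw [le_div_iff₀ (sub_pos.mpr hq.2)]
    have hML : 2 * L / ε ≤ 2 * M * L / ε := by gcongr; nlinarith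
    have hLε : 0 ≤ 2 * L / ε := by positivity
    nlinarith [mul_le_mul_of_nonneg_right hw₀ (sub_pos.mpr hq.2).le, mul_nonneg hLε hq.1.le]
  calc mechProb m e d q ε v j ≤ Real.exp (-(ε / 2) * (2 * L / ε)) :=
        exp_div_sum_exp_le (by positivity) hj₀ hgap
    _ = Real.exp (-L) := by congr 1; field_simp

end MechProb

open scoped ENNReal in
theorem one_sub_card_mul_le_measure_preimage {Ω ι α : Type*} [MeasurableSpace Ω]
    [MeasurableSpace α] [MeasurableSingletonClass α] {P : Measure Ω} {X : Ω → α}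
    (hX : Measurable X) {S : Finset ι} {f : ι → α} (hf : Set.InjOn f S)
    (hS : ∑ j ∈ S, P {ω | X ω = f j} = 1) {G : Set α} {r : ℝ≥0∞}
    (hr : ∀ j ∈ S, f j ∉ G → P {ω | X ω = f j} ≤ r) :
    1 - S.card * r ≤ P (X ⁻¹' G) := by
  classical
  have hfiber : ∀ T : Finset α, ∀ a ∈ T, MeasurableSet (X ⁻¹' {a}) :=
    fun _ a _ ↦ hX (measurableSet_singleton a)
  set B := (S.filter (f · ∉ G)).image f
  have hB : P (X ⁻¹' B) ≤ S.card * r := by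
    rw [← sum_measure_preimage_singleton B (hfiber B),
      Finset.sum_image (hf.mono (Finset.filter_subset _ S))]
    calc ∑ j ∈ S.filter (f · ∉ G), P (X ⁻¹' {f j})
        ≤ (S.filter (f · ∉ G)).card • r :=
          Finset.sum_le_card_nsmul _ _ _ fun j hj ↦ hr j (Finset.mem_filter.mp hj).1
            (Finset.mem_filter.mp hj).2
      _ ≤ S.card * r := by
          rw [nsmul_eq_mul]
          gcongr
          exact Finset.filter_subset _ S
  have hcover : X ⁻¹' (S.image f) ⊆ X ⁻¹' G ∪ X ⁻¹' B := fun ω hω ↦ by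
    obtain ⟨j, hj, hjω⟩ := Finset.mem_image.mp hω
    by_cases hG : X ω ∈ G
    · exact Or.inl hG
    · exact Or.inr <|
        Finset.mem_image.mpr ⟨j, Finset.mem_filter.mpr ⟨hj, hjω ▸ hG⟩, hjω⟩
  rw [tsub_le_iff_right]
  calc 1 = P (X ⁻¹' (S.image f)) := by
        rw [← sum_measure_preimage_singleton _ (hfiber _), Finset.sum_image hf, ← hS]
        rfl
    _ ≤ P (X ⁻¹' G ∪ X ⁻¹' B) := measure_mono hcover
    _ ≤ P (X ⁻¹' G) + S.card * r := (measure_union_le _ _).trans (by gcongr)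

theorem private_quantile_accuracy_lower_general
    {Ω : Type*} [MeasurableSpace Ω] (P : Measure Ω)
    (n m : ℕ) (hn : 1 ≤ n) (hm : 1 ≤ m)
    (e : ℕ → ℝ) (he0 : e 0 = 0) (hem : e m = 1) (hmono : ∀ j < m, e j < e (j + 1))
    (d : ℝ → ℝ)
    (hd : ∀ s : ℝ, ∀ j : ℕ, 1 ≤ j → j ≤ m → s ∈ Set.Ioc (e (j - 1)) (e j) → d s = e j)
    (s : Fin n → ℝ) (hs : ∀ i, s i ∈ Set.Ioc (0 : ℝ) 1)
    (q ε : ℝ) (hq : q ∈ Set.Ioo (0 : ℝ) 1) (hε : 0 < ε)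
    (shat : Ω → ℝ) (hshatmeas : Measurable shat)
    (hdist : ∀ j, 1 ≤ j → j ≤ m →
      P {ω | shat ω = e j} = ENNReal.ofReal (mechProb m e d q ε s j))
    (δ : ℝ) (hδ : δ ∈ Set.Ioo (0 : ℝ) 1) :
    1 - ENNReal.ofReal δ ≤
      P {ω | q - 2 * max ((1 - q) / q) 1 * Real.log (m / δ) / (n * ε) ≤
        (Set.ncard {i : Fin n | d (s i) ≤ shat ω} : ℝ) / n} := by
  have hgrid : ∀ i, ∃ j ∈ Finset.Icc 1 m, d (s i) = e j := fun i ↦ by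
    obtain ⟨j, hj, hsj⟩ := exists_mem_Icc_mem_Ioc (he0 ▸ hem ▸ hs i)
    exact ⟨j, hj, hd _ j (Finset.mem_Icc.mp hj).1 (Finset.mem_Icc.mp hj).2 hsj⟩
  obtain ⟨j₀, hj₀, hw₀⟩ := exists_quantWeight_le hn hq hgrid
  have hL : 0 ≤ Real.log (m / δ) :=
    Real.log_nonneg ((one_le_div hδ.1).mpr (hδ.2.le.trans (by exact_mod_cast hm)))
  have hinj : Set.InjOn e (Finset.Icc 1 m) :=
    (strictMonoOn_Iic_of_lt_succ hmono).injOn.mono fun j hj ↦ (Finset.mem_Icc.mp hj).2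
  refine le_trans ?_ (one_sub_card_mul_le_measure_preimage hshatmeas hinj ?_
    (G := {x | q - 2 * max ((1 - q) / q) 1 * Real.log (m / δ) / (n * ε) ≤
      ({i : Fin n | d (s i) ≤ x}.ncard : ℝ) / n}) (r := ENNReal.ofReal (δ / m)) ?_)
  · rw [Nat.card_Icc, add_tsub_cancel_right, ← ENNReal.ofReal_natCast,
      ← ENNReal.ofReal_mul (by positivity), mul_div_cancel₀ _ (by positivity)]
  · rw [Finset.sum_congr rfl fun j hj ↦
        hdist j (Finset.mem_Icc.mp hj).1 (Finset.mem_Icc.mp hj).2,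
      ← ENNReal.ofReal_sum_of_nonneg fun j _ ↦ mechProb_nonneg j, sum_mechProb hm,
      ENNReal.ofReal_one]
  · intro j hj hjG
    refine (hdist j (Finset.mem_Icc.mp hj).1 (Finset.mem_Icc.mp hj).2).trans_le
      (ENNReal.ofReal_le_ofReal ?_)
    calc mechProb m e d q ε s j ≤ Real.exp (-Real.log (m / δ)) :=
          mechProb_le_exp_neg_of_ncard_lt hq hε hn (le_max_right _ _) hL hj₀ hw₀
            (not_le.mp hjG)
      _ = δ / m := by rw [Real.exp_neg, Real.exp_log (by positivity [hδ.1]), inv_div]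

/-- **Accuracy of the private quantile mechanism (lower tail).**  With probability at
least `1 - δ` over the mechanism's randomness, at least a
`q - 2·max{(1-q)/q, 1}·log(m/δ)/(nε)` fraction of the discretized scores lie at or
below the output `ŝ`. -/
theorem private_quantile_accuracy_lower
    {Ω : Type*} [MeasurableSpace Ω] (P : Measure Ω) [IsProbabilityMeasure P]
    (n m : ℕ) (hn : 1 ≤ n) (hm : 1 ≤ m)
    (e : ℕ → ℝ) (he0 : e 0 = 0) (hem : e m = 1) (hmono : ∀ j < m, e j < e (j + 1))
    (d : ℝ → ℝ)
    (hd : ∀ s : ℝ, ∀ j : ℕ, 1 ≤ j → j ≤ m → s ∈ Set.Ioc (e (j - 1)) (e j) → d s = e j)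
    (s : Fin n → ℝ) (hs : ∀ i, s i ∈ Set.Ioc (0 : ℝ) 1)
    (q ε : ℝ) (hq : q ∈ Set.Ioo (0 : ℝ) 1) (hε : 0 < ε)
    (shat : Ω → ℝ) (hshatmeas : Measurable shat)
    (hdist : ∀ j, 1 ≤ j → j ≤ m →
      P {ω | shat ω = e j} = ENNReal.ofReal (mechProb m e d q ε s j))
    (δ : ℝ) (hδ : δ ∈ Set.Ioo (0 : ℝ) 1) :
    1 - ENNReal.ofReal δ ≤
      P {ω | q - 2 * max ((1 - q) / q) 1 * Real.log (m / δ) / (n * ε) ≤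
        (Set.ncard {i : Fin n | d (s i) ≤ shat ω} : ℝ) / n} :=
  private_quantile_accuracy_lower_general P n m hn hm e he0 hem hmono d hd s hs q ε hq hε shat
    hshatmeas hdist δ hδ
end

section
/- Let F be the cumulative distribution function of a probability distribution supported on a finite set {a_1,…,a_m} ⊂ ℝ, let Z_1,…,Z_n be i.i.d. with CDF F, let F̂ be their empirical CDF, and let p_max^m = max_{1≤i≤m} P(Z_1 = a_i). Then for every q ∈ (0,1], the random variable Z_Beta + p_max^m stochastically dominates F(F̂⁻¹(q)): for every t ∈ ℝ, P( F(F̂⁻¹(q)) ≤ t ) ≥ P( Z_Beta + p_max^m ≤ t ), where Z_Beta ∼ Beta(⌈nq⌉, n−⌈nq⌉+1). -/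
/-!
Let `k = ⌈nq⌉`. If at least `k` samples are `≤ z`, then `F̂⁻¹(q) ≤ z` and hence
`F(F̂⁻¹(q)) ≤ F z`. Take for `z` the largest atom with `F z ≤ t`: the next atom carries mass at
most `pmax`, so `F z ≥ min (t - pmax) 1`. The number of samples `≤ z` is `Bin(n, F z)`, and
`P(Bin(n, p) ≥ k)` is the `Beta(k, n - k + 1)` CDF at `p`: as a sum of Bernstein polynomials, its
derivative in `p` telescopes to `n·C(n-1, k-1)·p^(k-1)·(1-p)^(n-k)`. Monotonicity of the Beta CDF
concludes.
-/

open MeasureTheory ProbabilityTheory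

/-- The CDF of the `Beta(k, n - k + 1)` distribution (for `1 ≤ k ≤ n`), whose density
on `[0,1]` is proportional to `x^(k-1)·(1-x)^(n-k)`. -/
noncomputable def betaCDF (k n : ℕ) (t : ℝ) : ℝ :=
  (∫ x in Set.Icc (0 : ℝ) 1 ∩ Set.Iic t, x ^ (k - 1) * (1 - x) ^ (n - k)) /
    ∫ x in Set.Icc (0 : ℝ) 1, x ^ (k - 1) * (1 - x) ^ (n - k)

/-- The empirical quantile `F̂⁻¹(q) = inf{z : F̂(z) ≥ q}`, where `F̂` is the empirical
CDF of the tuple `x`. -/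
noncomputable def empQuantile {n : ℕ} (x : Fin n → ℝ) (q : ℝ) : ℝ :=
  sInf {z : ℝ | q ≤ (Set.ncard {i : Fin n | x i ≤ z} : ℝ) / n}

open Polynomial Finset

theorem Set.Icc_inter_Iic {α : Type*} [LinearOrder α] (a b c : α) :
    Icc a b ∩ Iic c = Icc a (min b c) := by
  rw [← Ici_inter_Iic, inter_assoc, Iic_inter_Iic, Ici_inter_Iic]

lemma setIntegral_Icc_eq_intervalIntegral {f : ℝ → ℝ} {a b : ℝ} (hab : a ≤ b) :
    ∫ x in Set.Icc a b, f x = ∫ x in a..b, f x := by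
  rw [intervalIntegral.integral_of_le hab, integral_Icc_eq_integral_Ioc]

noncomputable def binomialTail (n k : ℕ) : ℝ[X] :=
  ∑ j ∈ Icc k n, bernsteinPolynomial ℝ n j

lemma binomialTail_eval (n k : ℕ) (p : ℝ) :
    (binomialTail n k).eval p = ∑ j ∈ Icc k n, (n.choose j : ℝ) * p ^ j * (1 - p) ^ (n - j) := by
  simp [binomialTail, bernsteinPolynomial, eval_finsetSum]

lemma binomialTail_eval_zero {n k : ℕ} (hk : 1 ≤ k) : (binomialTail n k).eval 0 = 0 := by
  simp only [binomialTail, eval_finsetSum, bernsteinPolynomial.eval_at_0]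
  exact sum_eq_zero fun j hj => if_neg (by grind)

lemma binomialTail_eval_one {n k : ℕ} (hkn : k ≤ n) : (binomialTail n k).eval 1 = 1 := by
  simp [binomialTail, eval_finsetSum, bernsteinPolynomial.eval_at_1, hkn]

lemma derivative_binomialTail (n k : ℕ) :
    derivative (binomialTail n (k + 1)) = n * bernsteinPolynomial ℝ (n - 1) k := by
  rcases le_or_gt k n with hk | hk
  · rw [binomialTail, derivative_sum, ← Ico_add_one_right_eq_Icc, ← sum_Ico_add' _ k n 1]
    simp only [bernsteinPolynomial.derivative_succ, ← mul_sum]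
    rw [← neg_inj, ← mul_neg, ← sum_neg_distrib]
    simp only [neg_sub]
    rw [sum_Ico_sub (bernsteinPolynomial ℝ (n - 1)) hk]
    rcases n.eq_zero_or_pos with rfl | hn
    · simp
    · rw [bernsteinPolynomial.eq_zero_of_lt ℝ (by omega : n - 1 < n)]
      ring
  · rw [bernsteinPolynomial.eq_zero_of_lt ℝ (by omega), binomialTail, Icc_eq_empty (by omega)]
    simp

lemma binomialTail_eval_eq_integral {n k : ℕ} (hk : 1 ≤ k) (p : ℝ) :
    (binomialTail n k).eval p =
      (n * (n - 1).choose (k - 1)) * ∫ x in 0..p, x ^ (k - 1) * (1 - x) ^ (n - k) := by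
  obtain ⟨l, rfl⟩ : ∃ l, k = l + 1 := ⟨k - 1, by omega⟩
  have hftc := intervalIntegral.integral_eq_sub_of_hasDerivAt
    (fun x _ => (binomialTail n (l + 1)).hasDerivAt x)
    ((Polynomial.continuous _).intervalIntegrable 0 p)
  rw [binomialTail_eval_zero le_add_self, sub_zero, derivative_binomialTail] at hftc
  rw [← hftc, ← intervalIntegral.integral_const_mul]
  refine intervalIntegral.integral_congr fun x _ => ?_
  simp only [eval_mul, eval_natCast, bernsteinPolynomial, eval_pow, eval_X, eval_sub, eval_one]
  rw [Nat.add_sub_cancel, Nat.sub_sub, Nat.add_comm 1 l]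
  ring

lemma betaCDF_eq_binomialTail {k n : ℕ} (hk : 1 ≤ k) (hkn : k ≤ n) {p : ℝ}
    (hp : p ∈ Set.Icc 0 1) : betaCDF k n p = (binomialTail n k).eval p := by
  have hc : (n * (n - 1).choose (k - 1) : ℝ) ≠ 0 := by
    have : 0 < (n - 1).choose (k - 1) := Nat.choose_pos (by omega)
    have : 0 < n := by omega
    positivity
  rw [betaCDF, Set.Icc_inter_Iic, min_eq_right hp.2, setIntegral_Icc_eq_intervalIntegral hp.1,
    setIntegral_Icc_eq_intervalIntegral zero_le_one, ← mul_div_mul_left _ _ hc,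
    ← binomialTail_eval_eq_integral hk, ← binomialTail_eval_eq_integral hk,
    binomialTail_eval_one hkn, div_one]

lemma betaCDF_mono (k n : ℕ) : Monotone (betaCDF k n) := by
  intro s t hst
  have hnonneg : ∀ x ∈ Set.Icc (0 : ℝ) 1, 0 ≤ x ^ (k - 1) * (1 - x) ^ (n - k) := fun x hx =>
    mul_nonneg (pow_nonneg hx.1 _) (pow_nonneg (sub_nonneg.2 hx.2) _)
  refine div_le_div_of_nonneg_right ?_ (setIntegral_nonneg measurableSet_Icc hnonneg)
  refine setIntegral_mono_set ?_ ?_ ?_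
  · exact (Continuous.integrableOn_Icc (by fun_prop)).mono_set Set.inter_subset_left
  · exact (ae_restrict_iff' (measurableSet_Icc.inter measurableSet_Iic)).2
      (.of_forall fun x hx => hnonneg x hx.1)
  · exact (Set.inter_subset_inter_right _ (Set.Iic_subset_Iic.2 hst)).eventuallyLE

lemma betaCDF_min_one (k n : ℕ) (s : ℝ) : betaCDF k n (min s 1) = betaCDF k n s := by
  rw [betaCDF, betaCDF, Set.Icc_inter_Iic, Set.Icc_inter_Iic, min_comm s, ← min_assoc, min_self]

lemma betaCDF_of_neg (k n : ℕ) {s : ℝ} (hs : s < 0) : betaCDF k n s = 0 := by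
  rw [betaCDF, Set.Icc_inter_Iic, Set.Icc_eq_empty (by simp [hs]), Measure.restrict_empty,
    integral_zero_measure, zero_div]

lemma betaCDF_le_binomialTail {k n : ℕ} (hk : 1 ≤ k) (hkn : k ≤ n) {s p : ℝ}
    (hp : p ∈ Set.Icc 0 1) (hsp : min s 1 ≤ p) : betaCDF k n s ≤ (binomialTail n k).eval p := by
  rw [← betaCDF_min_one, ← betaCDF_eq_binomialTail hk hkn hp]
  exact betaCDF_mono k n hsp

lemma sum_powerset_le_card_eq_binomialTail {ι : Type*} [Fintype ι] (k : ℕ) (p : ℝ) :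
    ∑ S : Finset ι with k ≤ #S, p ^ #S * (1 - p) ^ (Fintype.card ι - #S) =
      (binomialTail (Fintype.card ι) k).eval p := by
  classical
  have hIcc : Icc k (Fintype.card ι) = {j ∈ range (Fintype.card ι + 1) | k ≤ j} := by
    ext; simp; omega
  rw [sum_filter, ← powerset_univ,
    sum_powerset_apply_card fun m => if k ≤ m then p ^ m * (1 - p) ^ (Fintype.card ι - m) else 0,
    binomialTail_eval, hIcc, sum_filter, card_univ]
  refine sum_congr rfl fun j _ => ?_
  split_ifs <;> simp [mul_assoc]

section Independence

variable {Ω ι β : Type*} [MeasurableSpace Ω] {P : Measure Ω} [IsProbabilityMeasure P] [Fintype ι]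
  [MeasurableSpace β] {X : ι → Ω → β} {s : Set β} {p : ℝ}

lemma ProbabilityTheory.iIndepFun.measureReal_forall_mem_iff_mem (hX : iIndepFun X P)
    (hmeas : ∀ i, Measurable (X i)) (hs : MeasurableSet s) (hp : ∀ i, P.real (X i ⁻¹' s) = p)
    (S : Finset ι) :
    P.real {ω | ∀ i, X i ω ∈ s ↔ i ∈ S} = p ^ #S * (1 - p) ^ (Fintype.card ι - #S) := by
  classical
  set B : ι → Set β := fun i => if i ∈ S then s else sᶜ
  have hB (i : ι) : MeasurableSet (B i) := by
    simp only [B]; split_ifs; exacts [hs, hs.compl]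
  have hinter : {ω | ∀ i, X i ω ∈ s ↔ i ∈ S} = ⋂ i, X i ⁻¹' B i := by
    ext ω
    simp only [Set.mem_ofPred_eq, Set.mem_iInter, Set.mem_preimage, B]
    refine forall_congr' fun i => ?_
    split_ifs with hi <;> simp [hi]
  have hfactor (i : ι) : P.real (X i ⁻¹' B i) = if i ∈ S then p else 1 - p := by
    simp only [B]; split_ifs
    · exact hp i
    · rw [Set.preimage_compl, probReal_compl_eq_one_sub (hmeas i hs), hp]
  rw [hinter, measureReal_def, hX.meas_iInter fun i => ⟨B i, hB i, rfl⟩, ENNReal.toReal_prod]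
  simp [← measureReal_def, hfactor, prod_ite, filter_not, card_univ_sdiff]

lemma ProbabilityTheory.iIndepFun.measureReal_le_ncard_eq_binomialTail (hX : iIndepFun X P)
    (hmeas : ∀ i, Measurable (X i)) (hs : MeasurableSet s) (hp : ∀ i, P.real (X i ⁻¹' s) = p)
    (k : ℕ) :
    P.real {ω | k ≤ {i | X i ω ∈ s}.ncard} = (binomialTail (Fintype.card ι) k).eval p := by
  classical
  set N : Ω → Finset ι := fun ω => {i | X i ω ∈ s}
  have hevent : {ω | k ≤ {i | X i ω ∈ s}.ncard} = N ⁻¹' {S | k ≤ #S} := by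
    ext ω; simp [N, ← Set.ncard_coe_finset]
  have hfiber (S : Finset ι) : N ⁻¹' {S} = {ω | ∀ i, X i ω ∈ s ↔ i ∈ S} := by
    ext ω; simp [N, Finset.ext_iff]
  have hmeasfiber (S : Finset ι) : MeasurableSet {ω | ∀ i, X i ω ∈ s ↔ i ∈ S} := by
    measurability
  rw [hevent, ← coe_filter_univ,
    ← sum_measureReal_preimage_singleton _ fun S _ => hfiber S ▸ hmeasfiber S]
  simp only [hfiber, hX.measureReal_forall_mem_iff_mem hmeas hs hp]
  exact sum_powerset_le_card_eq_binomialTail k p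

end Independence

lemma exists_measureReal_le_mem_Icc {Ω : Type*} [MeasurableSpace Ω] (P : Measure Ω)
    [IsProbabilityMeasure P] {X : Ω → ℝ} {s : Set ℝ} (hs : s.Finite) (hX : ∀ ω, X ω ∈ s)
    {pmax t : ℝ} (hatom : ∀ x ∈ s, P.real {ω | X ω = x} ≤ pmax) (ht : pmax ≤ t) :
    ∃ z, P.real {ω | X ω ≤ z} ∈ Set.Icc (min (t - pmax) 1) t := by
  set F : ℝ → ℝ := fun z => P.real {ω | X ω ≤ z}
  obtain ⟨ω₀⟩ := nonempty_of_isProbabilityMeasure P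
  obtain ⟨x₀, hx₀s, hx₀⟩ := s.exists_min_image id hs ⟨X ω₀, hX ω₀⟩
  have hFx₀ : F x₀ ≤ t := by
    refine (measureReal_mono fun ω (hω : X ω ≤ x₀) => ?_).trans ((hatom x₀ hx₀s).trans ht)
    exact le_antisymm hω (hx₀ _ (hX ω))
  obtain ⟨z, ⟨-, hzt⟩, hz⟩ := Set.exists_max_image {x ∈ s | F x ≤ t} id
    (hs.sep _) ⟨x₀, hx₀s, hFx₀⟩
  refine ⟨z, ?_, hzt⟩
  by_cases hjump : ∃ y ∈ s, t < F y
  · obtain ⟨y, ⟨hys, hyt⟩, hy⟩ := Set.exists_min_image {y ∈ s | t < F y} id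
      (hs.sep _) hjump
    have hsplit : {ω | X ω ≤ y} ⊆ {ω | X ω ≤ z} ∪ {ω | X ω = y} := by
      intro ω (hω : X ω ≤ y)
      by_cases hFω : F (X ω) ≤ t
      · exact Or.inl (hz _ ⟨hX ω, hFω⟩)
      · exact Or.inr (le_antisymm hω (hy _ ⟨hX ω, not_le.1 hFω⟩))
    have : F y ≤ F z + pmax :=
      (measureReal_mono hsplit).trans ((measureReal_union_le _ _).trans
        (add_le_add le_rfl (hatom y hys)))
    exact (min_le_left _ _).trans (by linarith)
  · push Not at hjump
    have hall : {ω | X ω ≤ z} = Set.univ :=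
      Set.eq_univ_of_forall fun ω => hz _ ⟨hX ω, hjump _ (hX ω)⟩
    simp only [hall, probReal_univ, min_le_right]

lemma empQuantile_le_of_ceil_le {n : ℕ} {x : Fin n → ℝ} {q z : ℝ} (hn : 1 ≤ n) (hq : 0 < q)
    (hz : ⌈n * q⌉₊ ≤ {i | x i ≤ z}.ncard) : empQuantile x q ≤ z := by
  have hmem : q ≤ ({i | x i ≤ z}.ncard : ℝ) / n := by
    rw [le_div_iff₀ (by positivity), mul_comm]
    exact (Nat.le_ceil _).trans (by exact_mod_cast hz)
  obtain ⟨b, hb⟩ := (Set.finite_range x).bddBelow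
  refine csInf_le ⟨b, fun y (hy : q ≤ _) => ?_⟩ hmem
  obtain ⟨i, hi⟩ : {i | x i ≤ y}.Nonempty := by
    by_contra hempty
    rw [Set.not_nonempty_iff_eq_empty.1 hempty, Set.ncard_empty, Nat.cast_zero, zero_div] at hy
    exact hy.not_gt hq
  exact (hb ⟨i, rfl⟩).trans hi

theorem cdf_empQuantile_dominated_by_shifted_beta_general
    {Ω ι : Type*} [MeasurableSpace Ω] (P : Measure Ω) [IsProbabilityMeasure P]
    [Fintype ι]
    (a : ι → ℝ)
    (n : ℕ) (hn : 1 ≤ n)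
    (Z : Fin n → Ω → ℝ) (hmeas : ∀ i, Measurable (Z i))
    (hiid : iIndepFun Z P)
    (hident : ∀ i j, IdentDistrib (Z i) (Z j) P P)
    (hsupp : ∀ i ω, Z i ω ∈ Set.range a)
    (F : ℝ → ℝ) (hF : ∀ z, F z = (P {ω | Z ⟨0, hn⟩ ω ≤ z}).toReal)
    (pmax : ℝ) (hpmax : pmax = ⨆ i, (P {ω | Z ⟨0, hn⟩ ω = a i}).toReal)
    (q : ℝ) (hq : q ∈ Set.Ioc (0 : ℝ) 1) (t : ℝ) :
    betaCDF ⌈(n : ℝ) * q⌉₊ n (t - pmax) ≤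
      (P {ω | F (empQuantile (fun i => Z i ω) q) ≤ t}).toReal := by
  obtain ⟨hq0, hq1⟩ := hq
  obtain rfl : F = fun z => P.real {ω | Z ⟨0, hn⟩ ω ≤ z} := funext hF
  simp only [← measureReal_def] at hpmax
  set k := ⌈(n : ℝ) * q⌉₊
  have hk : 1 ≤ k := Nat.one_le_ceil_iff.2 (by positivity)
  have hkn : k ≤ n := Nat.ceil_le.2 (mul_le_of_le_one_right n.cast_nonneg hq1)
  rcases lt_or_ge (t - pmax) 0 with hneg | hpos
  · exact (betaCDF_of_neg _ _ hneg).trans_le ENNReal.toReal_nonneg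
  have hatom : ∀ x ∈ Set.range a, P.real {ω | Z ⟨0, hn⟩ ω = x} ≤ pmax := by
    rintro _ ⟨i, rfl⟩
    exact hpmax ▸ le_ciSup (Set.finite_range fun i => P.real {ω | Z ⟨0, hn⟩ ω = a i}).bddAbove i
  obtain ⟨z, hz, hzt⟩ := exists_measureReal_le_mem_Icc P (Set.finite_range a)
    (hsupp ⟨0, hn⟩) hatom (by linarith)
  have hlaw (i : Fin n) : P.real (Z i ⁻¹' Set.Iic z) = P.real {ω | Z ⟨0, hn⟩ ω ≤ z} := by
    simp only [measureReal_def, (hident i ⟨0, hn⟩).measure_mem_eq measurableSet_Iic]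
    rfl
  calc betaCDF k n (t - pmax) ≤ (binomialTail n k).eval (P.real {ω | Z ⟨0, hn⟩ ω ≤ z}) :=
        betaCDF_le_binomialTail hk hkn ⟨measureReal_nonneg, measureReal_le_one⟩ hz
    _ = P.real {ω | k ≤ {i | Z i ω ≤ z}.ncard} := by
        simpa using (hiid.measureReal_le_ncard_eq_binomialTail hmeas measurableSet_Iic hlaw k).symm
    _ ≤ _ := measureReal_mono fun ω (hω : k ≤ _) =>
        (measureReal_mono fun _ h => h.trans (empQuantile_le_of_ceil_le hn hq0 hω)).trans hzt

/-- **The plug-in CDF value at the empirical quantile of i.i.d. finitely supported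
samples is stochastically dominated by `Z_Beta + pmax`** where
`Z_Beta ∼ Beta(⌈nq⌉, n - ⌈nq⌉ + 1)` and `pmax` is the largest atom of the common
distribution: for all `t`, `P(F(F̂⁻¹(q)) ≤ t) ≥ P(Z_Beta + pmax ≤ t)`, the right-hand
side being the Beta CDF evaluated at `t - pmax`. -/
theorem cdf_empQuantile_dominated_by_shifted_beta
    {Ω ι : Type*} [MeasurableSpace Ω] (P : Measure Ω) [IsProbabilityMeasure P]
    [Fintype ι] [Nonempty ι]
    (a : ι → ℝ)
    (n : ℕ) (hn : 1 ≤ n)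
    (Z : Fin n → Ω → ℝ) (hmeas : ∀ i, Measurable (Z i))
    (hiid : iIndepFun Z P)
    (hident : ∀ i j, IdentDistrib (Z i) (Z j) P P)
    (hsupp : ∀ i ω, Z i ω ∈ Set.range a)
    (F : ℝ → ℝ) (hF : ∀ z, F z = (P {ω | Z ⟨0, hn⟩ ω ≤ z}).toReal)
    (pmax : ℝ) (hpmax : pmax = ⨆ i, (P {ω | Z ⟨0, hn⟩ ω = a i}).toReal)
    (q : ℝ) (hq : q ∈ Set.Ioc (0 : ℝ) 1) (t : ℝ) :
    betaCDF ⌈(n : ℝ) * q⌉₊ n (t - pmax) ≤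
      (P {ω | F (empQuantile (fun i => Z i ω) q) ≤ t}).toReal :=
  cdf_empQuantile_dominated_by_shifted_beta_general P a n hn Z hmeas hiid hident hsupp F hF pmax
    hpmax q hq t
end

section
/- Let F be the cumulative distribution function of a probability distribution supported on a finite set {a_1,…,a_m} ⊂ ℝ, let Z_1,…,Z_n be i.i.d. with CDF F, let F̂ be their empirical CDF, and let p_max^m = max_{1≤i≤m} P(Z_1 = a_i). Then for every q ∈ (0,1], E[ F(F̂⁻¹(q)) ] ≤ ⌈nq⌉ / (n+1) + p_max^m. -/
/-!
Write `k = ⌈nq⌉₊`. The empirical quantile is the `k`-th order statistic, so `F̂⁻¹(q) ≤ z` iff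
at least `k` samples are `≤ z`. Since every atom has mass at most `pmax`,
`F(F̂⁻¹(q)) ≤ P(Z' < F̂⁻¹(q)) + pmax` for an independent copy `Z'`, and `Z' < F̂⁻¹(q)` says
that fewer than `k` of `Z_1, …, Z_n` lie at or below `Z'`. Appending `Z'` as an `(n+1)`-st
sample, this is the event that the last coordinate of an exchangeable vector has fewer than
`k` others at or below it; at most `k` coordinates can have this property, so by symmetry the
event has probability at most `k / (n + 1)`.
-/

open MeasureTheory ProbabilityTheory Finset
open scoped ENNReal

section OrderStatistic

variable {ι α : Type*} [Fintype ι] [LinearOrder α]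

lemma exists_setOf_le_card_filter_le_eq_Ici (x : ι → α) {k : ℕ} (hk : 0 < k)
    (hkn : k ≤ Fintype.card ι) : ∃ i, {z | k ≤ #{j | x j ≤ z}} = Set.Ici (x i) := by
  set S := {z | k ≤ #{j | x j ≤ z}}
  have upper : ∀ ⦃z z'⦄, z ≤ z' → z ∈ S → z' ∈ S := fun z z' h hz =>
    hz.trans <| card_le_card fun j hj => by
      simp only [mem_filter, mem_univ, true_and] at hj ⊢
      exact hj.trans h
  have sample_below : ∀ z ∈ S, ∃ i, x i ∈ S ∧ x i ≤ z := by
    intro z hz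
    obtain ⟨i, hi, hmax⟩ := exists_max_image _ x (card_pos.1 (hk.trans_le hz))
    exact ⟨i, hz.trans (card_le_card fun j hj => by simpa using hmax j hj), (mem_filter.1 hi).2⟩
  have : Nonempty ι := Fintype.card_pos_iff.1 (hk.trans_le hkn)
  obtain ⟨imax, -, himax⟩ := exists_max_image univ x univ_nonempty
  have hne : ({i | x i ∈ S} : Finset ι).Nonempty :=
    ⟨imax, by simpa [S, filter_true_of_mem fun j _ => himax j (mem_univ j)] using hkn⟩
  obtain ⟨i₀, hi₀, hmin⟩ := exists_min_image _ x hne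
  refine ⟨i₀, Set.Subset.antisymm (fun z hz => ?_) fun z hz =>
    upper hz (mem_filter.1 hi₀).2⟩
  obtain ⟨i, hiS, hiz⟩ := sample_below z hz
  exact (hmin i (by simpa using hiS)).trans hiz

variable [DecidableEq ι]

def lowerCount (y : ι → α) (j : ι) : ℕ := #{i | i ≠ j ∧ y i ≤ y j}

lemma lowerCount_comp_perm (y : ι → α) (σ : Equiv.Perm ι) (j : ι) :
    lowerCount (y ∘ σ) j = lowerCount y (σ j) :=
  card_equiv σ fun i => by simp

lemma card_filter_lowerCount_lt_le (y : ι → α) (k : ℕ) : #{j | lowerCount y j < k} ≤ k := by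
  set J : Finset ι := {j | lowerCount y j < k}
  rcases J.eq_empty_or_nonempty with hJ | hJ
  · simp [hJ]
  -- every other element of `J` lies at or below the `y`-largest one
  obtain ⟨j, hj, hmax⟩ := exists_max_image J y hJ
  have hbelow : J.erase j ⊆ ({i | i ≠ j ∧ y i ≤ y j} : Finset ι) := fun i hi => by
    simpa using ⟨(mem_erase.1 hi).1, hmax i (mem_erase.1 hi).2⟩
  have hjk : lowerCount y j < k := (mem_filter.1 hj).2
  have := card_le_card hbelow
  rw [card_erase_of_mem hj] at this
  unfold lowerCount at hjk
  omega

lemma lowerCount_snoc_last {n : ℕ} (x : Fin n → α) (r : α) :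
    lowerCount (Fin.snoc x r : Fin (n + 1) → α) (Fin.last n) = #{i | x i ≤ r} := by
  rw [lowerCount, card_filter, card_filter, Fin.sum_univ_castSucc]
  simp [Fin.castSucc_ne_last]

end OrderStatistic

section EmpQuantile

variable {n : ℕ} {q : ℝ}

lemma empQuantile_le_iff (hn : 0 < n) (hq : q ∈ Set.Ioc 0 1) (x : Fin n → ℝ) {z : ℝ} :
    empQuantile x q ≤ z ↔ ⌈n * q⌉₊ ≤ #{i | x i ≤ z} := by
  have hn' : (0 : ℝ) < n := Nat.cast_pos.2 hn
  have hset : {z : ℝ | q ≤ (Set.ncard {i : Fin n | x i ≤ z} : ℝ) / n} =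
      {z | ⌈n * q⌉₊ ≤ #{i | x i ≤ z}} := by
    ext z
    change q ≤ _ ↔ ⌈n * q⌉₊ ≤ _
    rw [le_div_iff₀ hn', mul_comm, Nat.ceil_le, ← Set.ncard_coe_finset]
    simp
  obtain ⟨i, hi⟩ := exists_setOf_le_card_filter_le_eq_Ici x
    (Nat.ceil_pos.2 (mul_pos hn' hq.1)) (by simpa using Nat.ceil_le.2 (by nlinarith [hq.2]))
  rw [empQuantile, hset, hi, csInf_Ici, ← Set.mem_Ici, ← hi]
  rfl

lemma measurable_empQuantile (hn : 0 < n) (hq : q ∈ Set.Ioc 0 1) :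
    Measurable fun x : Fin n → ℝ => empQuantile x q := by
  refine measurable_of_Iic fun t => ?_
  simp_rw [Set.preimage, Set.mem_Iic, empQuantile_le_iff hn hq, card_filter]
  refine measurableSet_le measurable_const (Finset.measurable_sum _ fun i _ => ?_)
  exact Measurable.ite (measurableSet_le (measurable_pi_apply i) measurable_const)
    measurable_const measurable_const

end EmpQuantile

section Exchangeability

variable {ι : Type*} [Fintype ι] [DecidableEq ι] (μ : Measure ℝ)

lemma measurableSet_lowerCount_lt (j : ι) (k : ℕ) :
    MeasurableSet {y : ι → ℝ | lowerCount y j < k} := by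
  simp_rw [lowerCount, card_filter]
  refine measurableSet_lt (Finset.measurable_sum _ fun i _ => ?_) measurable_const
  exact Measurable.ite ((MeasurableSet.const _).inter
    (measurableSet_le (measurable_pi_apply i) (measurable_pi_apply j)))
    measurable_const measurable_const

lemma measure_pi_lowerCount_lt_eq [SigmaFinite μ] (j j' : ι) (k : ℕ) :
    Measure.pi (fun _ : ι => μ) {y | lowerCount y j < k} =
      Measure.pi (fun _ : ι => μ) {y | lowerCount y j' < k} := by
  set σ := Equiv.swap j j'
  have hσ (y : ι → ℝ) : Equiv.piCongrLeft (fun _ => ℝ) σ y = y ∘ σ.symm :=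
    funext fun b => by simpa using Equiv.piCongrLeft_apply_apply (fun _ => ℝ) σ y (σ.symm b)
  rw [← (measurePreserving_piCongrLeft (fun _ : ι => μ) σ).measure_preimage
    (measurableSet_lowerCount_lt j' k).nullMeasurableSet]
  congr 1
  ext y
  simp [MeasurableEquiv.coe_piCongrLeft, hσ, lowerCount_comp_perm, σ]

lemma card_mul_measure_pi_lowerCount_lt_le [IsProbabilityMeasure μ] (j : ι) (k : ℕ) :
    Fintype.card ι * Measure.pi (fun _ : ι => μ) {y | lowerCount y j < k} ≤ k := by
  set ν := Measure.pi fun _ : ι => μ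
  calc Fintype.card ι * ν {y | lowerCount y j < k}
      = ∑ j', ν {y | lowerCount y j' < k} := by
        simp [ν, measure_pi_lowerCount_lt_eq μ _ j]
    _ = ∫⁻ y, ∑ j', {y | lowerCount y j' < k}.indicator 1 y ∂ν := by
        rw [lintegral_finsetSum _ fun j' _ =>
          measurable_one.indicator (measurableSet_lowerCount_lt j' k)]
        simp [lintegral_indicator_one (measurableSet_lowerCount_lt _ k)]
    _ ≤ ∫⁻ _, (k : ℝ≥0∞) ∂ν := lintegral_mono fun y => by
        have := Nat.cast_le (α := ℝ≥0∞).2 (card_filter_lowerCount_lt_le y k)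
        rw [card_filter, Nat.cast_sum] at this
        simpa [Set.indicator_apply] using this
    _ = k := by simp

end Exchangeability

lemma lintegral_measure_card_filter_le_lt_le (μ : Measure ℝ) [IsProbabilityMeasure μ]
    (n k : ℕ) :
    ∫⁻ x, μ {r | #{i | x i ≤ r} < k} ∂(Measure.pi fun _ : Fin n => μ) ≤ k / (n + 1) := by
  set e := MeasurableEquiv.piFinSuccAbove (fun _ : Fin (n + 1) => ℝ) (Fin.last n)
  set C := {y : Fin (n + 1) → ℝ | lowerCount y (Fin.last n) < k}
  have hC : MeasurableSet C := measurableSet_lowerCount_lt _ k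
  have he (r : ℝ) (x : Fin n → ℝ) : e.symm (r, x) = Fin.snoc x r := by
    simp [e, MeasurableEquiv.piFinSuccAbove, Fin.insertNthEquiv_last]
    rfl
  have hsnoc : ∫⁻ x, μ {r | #{i | x i ≤ r} < k} ∂(Measure.pi fun _ : Fin n => μ) =
      (μ.prod (Measure.pi fun _ : Fin n => μ)) (e.symm ⁻¹' C) := by
    rw [Measure.prod_apply_symm (e.symm.measurable hC)]
    simp [C, he, lowerCount_snoc_last]
  rw [hsnoc, ((measurePreserving_piFinSuccAbove (fun _ => μ) (Fin.last n)).symm).measure_preimage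
    hC.nullMeasurableSet, ENNReal.le_div_iff_mul_le (by simp) (by simp), mul_comm]
  simpa using card_mul_measure_pi_lowerCount_lt_le μ (Fin.last n) k

lemma measurable_measure_Iio_empQuantile (μ : Measure ℝ) {n : ℕ} (hn : 0 < n) {q : ℝ}
    (hq : q ∈ Set.Ioc 0 1) : Measurable fun x : Fin n → ℝ => μ (Set.Iio (empQuantile x q)) :=
  (Monotone.measurable (f := fun r => μ (Set.Iio r)) fun _ _ h =>
    measure_mono (Set.Iio_subset_Iio h)).comp (measurable_empQuantile hn hq)

lemma integral_measure_Iio_empQuantile_le (μ : Measure ℝ) [IsProbabilityMeasure μ] {n : ℕ}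
    (hn : 0 < n) {q : ℝ} (hq : q ∈ Set.Ioc 0 1) :
    ∫ x, (μ (Set.Iio (empQuantile x q))).toReal ∂(Measure.pi fun _ : Fin n => μ) ≤
      ⌈n * q⌉₊ / (n + 1) := by
  have hIio (x : Fin n → ℝ) :
      Set.Iio (empQuantile x q) = {r | #{i | x i ≤ r} < ⌈n * q⌉₊} := by
    ext r
    rw [Set.mem_Iio, ← not_le, empQuantile_le_iff hn hq, not_le]
    rfl
  rw [integral_toReal (measurable_measure_Iio_empQuantile μ hn hq).aemeasurable
    (ae_of_all _ fun _ => measure_lt_top _ _)]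
  simp_rw [hIio]
  calc _ ≤ ((⌈n * q⌉₊ : ℝ≥0∞) / (n + 1)).toReal :=
        ENNReal.toReal_mono (ENNReal.div_lt_top (by simp) (by simp)).ne
          (lintegral_measure_card_filter_le_lt_le μ n _)
    _ = _ := by rw [ENNReal.toReal_div]; norm_cast

lemma toReal_measure_Iic_le_add_iSup {ι : Type*} [Finite ι] (μ : Measure ℝ)
    [IsFiniteMeasure μ] (a : ι → ℝ) (hμ : μ (Set.range a)ᶜ = 0) (z : ℝ) :
    (μ (Set.Iic z)).toReal ≤ (μ (Set.Iio z)).toReal + ⨆ i, (μ {a i}).toReal := by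
  rw [← Set.Iio_union_right, measure_union (by simp) (measurableSet_singleton z),
    ENNReal.toReal_add (measure_ne_top _ _) (measure_ne_top _ _)]
  gcongr
  by_cases hz : z ∈ Set.range a
  · obtain ⟨i, rfl⟩ := hz
    exact le_ciSup (Set.finite_range fun i => (μ {a i}).toReal).bddAbove i
  · rw [measure_mono_null (Set.singleton_subset_iff.2 hz) hμ, ENNReal.toReal_zero]
    exact Real.iSup_nonneg fun _ => ENNReal.toReal_nonneg

lemma ProbabilityTheory.iIndepFun.map_fun_eq_pi_map_of_identDistrib {Ω ι β : Type*}
    [MeasurableSpace Ω] [MeasurableSpace β] [Fintype ι] {P : Measure Ω} {Z : ι → Ω → β}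
    (hiid : iIndepFun Z P) {i₀ : ι} (hident : ∀ i, IdentDistrib (Z i) (Z i₀) P P) :
    P.map (fun ω i => Z i ω) = Measure.pi fun _ => P.map (Z i₀) := by
  rw [hiid.map_fun_eq_pi_map fun i => (hident i).aemeasurable_fst]
  exact congrArg Measure.pi (funext fun i => (hident i).map_eq)

theorem expected_cdf_empQuantile_le_general
    {Ω ι : Type*} [MeasurableSpace Ω] (P : Measure Ω) [IsProbabilityMeasure P]
    [Fintype ι]
    (a : ι → ℝ)
    (n : ℕ) (hn : 1 ≤ n)
    (Z : Fin n → Ω → ℝ) (hmeas : ∀ i, Measurable (Z i))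
    (hiid : iIndepFun Z P)
    (hident : ∀ i j, IdentDistrib (Z i) (Z j) P P)
    (hsupp : ∀ i ω, Z i ω ∈ Set.range a)
    (F : ℝ → ℝ) (hF : ∀ z, F z = (P {ω | Z ⟨0, hn⟩ ω ≤ z}).toReal)
    (pmax : ℝ) (hpmax : pmax = ⨆ i, (P {ω | Z ⟨0, hn⟩ ω = a i}).toReal)
    (q : ℝ) (hq : q ∈ Set.Ioc (0 : ℝ) 1) :
    ∫ ω, F (empQuantile (fun i => Z i ω) q) ∂P ≤
      (⌈(n : ℝ) * q⌉₊ : ℝ) / ((n : ℝ) + 1) + pmax := by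
  set μ := P.map (Z ⟨0, hn⟩)
  have : IsProbabilityMeasure μ := Measure.isProbabilityMeasure_map (hmeas _).aemeasurable
  have hvec : Measurable fun ω i => Z i ω := measurable_pi_lambda _ hmeas
  have hcdf (z : ℝ) : F z = (μ (Set.Iic z)).toReal := by
    rw [hF, Measure.map_apply (hmeas _) measurableSet_Iic]
    rfl
  have hatoms : pmax = ⨆ i, (μ {a i}).toReal := by
    simp_rw [hpmax, μ, Measure.map_apply (hmeas _) (measurableSet_singleton _)]
    rfl
  have hμ : μ (Set.range a)ᶜ = 0 := by
    rw [Measure.map_apply (hmeas _) (Set.finite_range a).measurableSet.compl]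
    simp [Set.preimage, hsupp]
  have hG := (measurable_measure_Iio_empQuantile μ hn hq).ennreal_toReal
  have hint : Integrable (fun ω => (μ (Set.Iio (empQuantile (fun i => Z i ω) q))).toReal) P :=
    Integrable.of_bound (hG.comp hvec).aestronglyMeasurable 1 (ae_of_all _ fun ω => by
      rw [Real.norm_of_nonneg ENNReal.toReal_nonneg]; exact measureReal_le_one)
  calc ∫ ω, F (empQuantile (fun i => Z i ω) q) ∂P
      ≤ ∫ ω, ((μ (Set.Iio (empQuantile (fun i => Z i ω) q))).toReal + pmax) ∂P :=
        integral_mono_of_nonneg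
          (ae_of_all _ fun ω => by simp only [Pi.zero_apply, hcdf]; positivity)
          (hint.add (integrable_const _)) (ae_of_all _ fun ω => by
            simpa only [hcdf, hatoms] using toReal_measure_Iic_le_add_iSup μ a hμ _)
    _ = ∫ x, (μ (Set.Iio (empQuantile x q))).toReal ∂(Measure.pi fun _ => μ) + pmax := by
        rw [integral_add hint (integrable_const _), integral_const,
          ← hiid.map_fun_eq_pi_map_of_identDistrib fun i => hident i _,
          integral_map hvec.aemeasurable hG.aestronglyMeasurable]
        simp
    _ ≤ _ := by
        gcongr
        exact integral_measure_Iio_empQuantile_le μ hn hq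

/-- **Upper bound on the expected plug-in CDF value at the empirical quantile** of
i.i.d. finitely supported samples: `E[F(F̂⁻¹(q))] ≤ ⌈nq⌉/(n+1) + pmax`, where `pmax`
is the largest atom of the common distribution. -/
theorem expected_cdf_empQuantile_le
    {Ω ι : Type*} [MeasurableSpace Ω] (P : Measure Ω) [IsProbabilityMeasure P]
    [Fintype ι] [Nonempty ι]
    (a : ι → ℝ)
    (n : ℕ) (hn : 1 ≤ n)
    (Z : Fin n → Ω → ℝ) (hmeas : ∀ i, Measurable (Z i))
    (hiid : iIndepFun Z P)
    (hident : ∀ i j, IdentDistrib (Z i) (Z j) P P)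
    (hsupp : ∀ i ω, Z i ω ∈ Set.range a)
    (F : ℝ → ℝ) (hF : ∀ z, F z = (P {ω | Z ⟨0, hn⟩ ω ≤ z}).toReal)
    (pmax : ℝ) (hpmax : pmax = ⨆ i, (P {ω | Z ⟨0, hn⟩ ω = a i}).toReal)
    (q : ℝ) (hq : q ∈ Set.Ioc (0 : ℝ) 1) :
    ∫ ω, F (empQuantile (fun i => Z i ω) q) ∂P ≤
      (⌈(n : ℝ) * q⌉₊ : ℝ) / ((n : ℝ) + 1) + pmax :=
  expected_cdf_empQuantile_le_general P a n hn Z hmeas hiid hident hsupp F hF pmax hpmax q hq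
end
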